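/- Let J₀ and J₁ be nonempty finite types, J = J₀ ⊕ J₁, and let ρ : Matrix (Fin 2 × J) (Fin 2 × J) ℂ be positive semidefinite with trace 1, satisfying the sector support condition: ρ ((k,σ),(l,τ)) = 0 unless σ lies in the J_k-component of J and τ lies in the J_l-component of J. Then ρ can be written as a finite convex combination ρ = ∑_t λ_t v_t v_tᴴ of rank-one projections onto unit vectors v_t : Fin 2 × J → ℂ each supported in a single sector {(k, σ) : σ ∈ J_k} for some k ∈ Fin 2, if and only if all off-diagonal entries vanish: ρ ((0,σ),(1,τ)) = 0 for all σ, τ ∈ J. -/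

import Mathlib

open scoped BigOperators ComplexOrder

def inSector {J₀ J₁ : Type*} (k : Fin 2) (σ : J₀ ⊕ J₁) : Prop :=
  match σ with
  | .inl _ => k = 0
  | .inr _ => k = 1

/-!
If `η = 0`, the support condition and hermiticity make `ρ` block diagonal with respect to the two
sectors `{(k, σ) | σ ∈ J_k}`. Each block is a principal submatrix of `ρ`, hence positive
semidefinite, and its spectral decomposition, with the eigenvectors extended by zero, writes the
block as a nonnegative combination of projections onto unit vectors of that sector; the weights
add up to `tr ρ = 1`. Conversely, a projection onto a vector living in one sector has no entries
between the two sectors.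
-/

namespace Matrix

theorem sum_smul_vecMulVec_star_apply_eq_zero {ι I R : Type*} [Fintype ι] [Semiring R]
    [StarRing R] (c : ι → R) (v : ι → I → R) {a b : I} (h : ∀ t, v t a = 0 ∨ v t b = 0) :
    (∑ t, c t • vecMulVec (v t) (star (v t))) a b = 0 := by
  refine (sum_apply _ _ _ _).trans (Finset.sum_eq_zero fun t _ => ?_)
  rcases h t with h | h <;> simp [vecMulVec_apply, h]

theorem trace_sum_smul_vecMulVec_star {ι I : Type*} [Fintype ι] [Fintype I] (lam : ι → ℝ)
    (v : ι → I → ℂ) (hv : ∀ t, ∑ a, Complex.normSq (v t a) = 1) :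
    trace (∑ t, (lam t : ℂ) • vecMulVec (v t) (star (v t))) = ∑ t, lam t := by
  simp [trace_sum, dotProduct, Complex.mul_conj, ← Complex.ofReal_sum, hv]

theorem PosSemidef.exists_eq_sum_smul_vecMulVec {I : Type*} [Fintype I]
    {A : Matrix I I ℂ} (hA : A.PosSemidef) :
    ∃ (μ : I → ℝ) (u : I → I → ℂ), (∀ i, 0 ≤ μ i) ∧
      (∀ i, ∑ a, Complex.normSq (u i a) = 1) ∧
      A = ∑ i, (μ i : ℂ) • vecMulVec (u i) (star (u i)) := by
  classical
  have hH := hA.isHermitian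
  refine ⟨hH.eigenvalues, fun i => hH.eigenvectorBasis i, hA.eigenvalues_nonneg, fun i => ?_, ?_⟩
  · have := EuclideanSpace.norm_sq_eq (hH.eigenvectorBasis i)
    rw [hH.eigenvectorBasis.orthonormal.1 i] at this
    simpa [Complex.normSq_eq_norm_sq] using this.symm
  · ext a b
    conv_lhs => rw [hH.spectral_theorem, Unitary.conjStarAlgAut_apply]
    simp [mul_apply, sum_apply, IsHermitian.eigenvectorUnitary_apply, vecMulVec_apply,
      diagonal_apply, mul_comm, mul_assoc]

def compress {I α : Type*} [Zero α] (p : I → Prop) [DecidablePred p] (A : Matrix I I α) :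
    Matrix I I α :=
  of fun a b => if p a ∧ p b then A a b else 0

theorem PosSemidef.exists_compress_eq_sum_smul_vecMulVec {I : Type*} [Fintype I]
    {A : Matrix I I ℂ} (hA : A.PosSemidef) (p : I → Prop) [DecidablePred p] :
    ∃ (μ : {a // p a} → ℝ) (u : {a // p a} → I → ℂ), (∀ i, 0 ≤ μ i) ∧
      (∀ i, ∑ a, Complex.normSq (u i a) = 1) ∧ (∀ i a, u i a ≠ 0 → p a) ∧
      A.compress p = ∑ i, (μ i : ℂ) • vecMulVec (u i) (star (u i)) := by
  obtain ⟨μ, w, hμ, hw, hA'⟩ :=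
    (hA.submatrix (Subtype.val : {a // p a} → I)).exists_eq_sum_smul_vecMulVec
  -- Zero-extended eigenvectors of the submatrix lie in the block, whatever their eigenvalue.
  let u : {a // p a} → I → ℂ := fun i a => if h : p a then w i ⟨a, h⟩ else 0
  refine ⟨μ, u, hμ, fun i => ?_, fun i a hu => ?_, ?_⟩
  · rw [← hw i]
    refine (Fintype.sum_of_injective Subtype.val Subtype.val_injective _ _
      (fun a ha => ?_) fun j => by simp [u, j.2]).symm
    rw [show u i a = 0 from dif_neg fun h => ha ⟨⟨a, h⟩, rfl⟩, map_zero]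
  · by_contra h
    simp [u, h] at hu
  · ext a b
    by_cases hab : p a ∧ p b
    · have := congr_fun₂ hA' ⟨a, hab.1⟩ ⟨b, hab.2⟩
      simpa [compress, hab, u, sum_apply, vecMulVec_apply] using this
    · simp only [compress, of_apply, if_neg hab, sum_apply, smul_apply, vecMulVec_apply]
      rw [not_and_or] at hab
      rcases hab with h | h <;> simp [u, h]

theorem eq_sum_compress {I κ α : Type*} [Fintype κ] [AddCommMonoid α] {A : Matrix I I α}
    (p : κ → I → Prop) [∀ k, DecidablePred (p k)] (hdisj : ∀ k j a, p k a → p j a → k = j)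
    (hblock : ∀ a b, A a b ≠ 0 → ∃ k, p k a ∧ p k b) :
    A = ∑ k, A.compress (p k) := by
  ext a b
  rw [sum_apply]
  by_cases hab : A a b = 0
  · simp [compress, hab]
  obtain ⟨k, ha, hb⟩ := hblock a b hab
  rw [Finset.sum_eq_single k (fun j _ hjk => ?_) (by simp)]
  · simp [compress, ha, hb]
  · have hja : ¬ p j a := fun hja => hjk (hdisj j k a hja ha)
    simp [compress, hja]

theorem PosSemidef.exists_eq_sum_smul_vecMulVec_of_blocks {I κ : Type*} [Fintype I] [Fintype κ]
    {A : Matrix I I ℂ} (hA : A.PosSemidef) (p : κ → I → Prop)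
    (hdisj : ∀ k j a, p k a → p j a → k = j) (hblock : ∀ a b, A a b ≠ 0 → ∃ k, p k a ∧ p k b) :
    ∃ (n : ℕ) (lam : Fin n → ℝ) (v : Fin n → I → ℂ), (∀ t, 0 ≤ lam t) ∧
      (∀ t, ∑ a, Complex.normSq (v t a) = 1) ∧ (∀ t, ∃ k, ∀ a, v t a ≠ 0 → p k a) ∧
      A = ∑ t, (lam t : ℂ) • vecMulVec (v t) (star (v t)) := by
  classical
  choose μ u hμ hu hsupp hcompress using fun k => hA.exists_compress_eq_sum_smul_vecMulVec (p k)
  let e := Fintype.equivFin (Σ k, {a // p k a})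
  refine ⟨_, fun t => μ _ (e.symm t).2, fun t => u _ (e.symm t).2, fun t => hμ _ _,
    fun t => hu _ _, fun t => ⟨_, hsupp _ _⟩, ?_⟩
  calc A = ∑ k, A.compress (p k) := eq_sum_compress p hdisj hblock
    _ = ∑ s : Σ k, {a // p k a}, (μ s.1 s.2 : ℂ) • vecMulVec (u s.1 s.2) (star (u s.1 s.2)) := by
      rw [Fintype.sum_sigma]
      exact Finset.sum_congr rfl fun k _ => hcompress k
    _ = _ := (e.symm.sum_comp _).symm

end Matrix

open Matrix

def sector {J₀ J₁ : Type*} (k : Fin 2) (a : Fin 2 × (J₀ ⊕ J₁)) : Prop :=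
  a.1 = k ∧ inSector k a.2

theorem sector_unique {J₀ J₁ : Type*} {k j : Fin 2} {a : Fin 2 × (J₀ ⊕ J₁)}
    (hk : sector k a) (hj : sector j a) : k = j :=
  hk.1.symm.trans hj.1

theorem exists_sector_of_apply_ne_zero {J₀ J₁ : Type*}
    {ρ : Matrix (Fin 2 × (J₀ ⊕ J₁)) (Fin 2 × (J₀ ⊕ J₁)) ℂ} (hρ : ρ.IsHermitian)
    (hsupp : ∀ (k l : Fin 2) (σ τ : J₀ ⊕ J₁),
      ρ (k, σ) (l, τ) ≠ 0 → inSector k σ ∧ inSector l τ)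
    (hη : ∀ σ τ : J₀ ⊕ J₁, ρ (0, σ) (1, τ) = 0) {a b : Fin 2 × (J₀ ⊕ J₁)} (hab : ρ a b ≠ 0) :
    ∃ k, sector k a ∧ sector k b := by
  obtain ⟨k, σ⟩ := a
  obtain ⟨l, τ⟩ := b
  obtain ⟨hσ, hτ⟩ := hsupp k l σ τ hab
  have hη' : ρ (1, σ) (0, τ) = 0 := by rw [← hρ.apply, hη, star_zero]
  suffices k = l by subst this; exact ⟨k, ⟨rfl, hσ⟩, ⟨rfl, hτ⟩⟩
  fin_cases k <;> fin_cases l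
  exacts [rfl, absurd (hη σ τ) hab, absurd hη' hab, rfl]

theorem one_mode_bipartition_separability
    {J₀ J₁ : Type*} [Fintype J₀] [Fintype J₁]
    (ρ : Matrix (Fin 2 × (J₀ ⊕ J₁)) (Fin 2 × (J₀ ⊕ J₁)) ℂ)
    (hpsd : ρ.PosSemidef) (htr : ρ.trace = 1)
    (hsupp : ∀ (k l : Fin 2) (σ τ : J₀ ⊕ J₁),
      ρ (k, σ) (l, τ) ≠ 0 → inSector k σ ∧ inSector l τ) :
    (∃ (n : ℕ) (lam : Fin n → ℝ) (v : Fin n → (Fin 2 × (J₀ ⊕ J₁)) → ℂ),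
      (∀ t, 0 ≤ lam t) ∧ (∑ t, lam t = 1) ∧
      (∀ t, ∑ a, Complex.normSq (v t a) = 1) ∧
      (∀ t, ∃ k : Fin 2, ∀ a : Fin 2 × (J₀ ⊕ J₁),
        v t a ≠ 0 → a.1 = k ∧ inSector k a.2) ∧
      ρ = ∑ t, (lam t : ℂ) • Matrix.of (fun a b => v t a * starRingEnd ℂ (v t b)))
    ↔ (∀ σ τ : J₀ ⊕ J₁, ρ (0, σ) (1, τ) = 0) := by
  constructor
  · rintro ⟨n, lam, v, -, -, -, hsec, rfl⟩ σ τ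
    refine sum_smul_vecMulVec_star_apply_eq_zero _ _ fun t => ?_
    obtain ⟨k, hk⟩ := hsec t
    by_contra! h
    exact zero_ne_one ((hk _ h.1).1.trans (hk _ h.2).1.symm)
  · intro hη
    obtain ⟨n, lam, v, hlam, hv, hsec, hρ⟩ := hpsd.exists_eq_sum_smul_vecMulVec_of_blocks sector
      (fun _ _ _ => sector_unique)
      fun _ _ => exists_sector_of_apply_ne_zero hpsd.isHermitian hsupp hη
    refine ⟨n, lam, v, hlam, ?_, hv, hsec, hρ⟩
    have htrace := trace_sum_smul_vecMulVec_star lam v hv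
    rw [← hρ, htr] at htrace
    exact_mod_cast htrace.symm
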